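/- Let (A,≻,≺,∗) be a coherent noncommutative pre-Poisson algebra and define x∘y = x≻y − y≺x. Then (A,∘,∗) is a compatible pre-Lie algebra: ∘ is a pre-Lie algebra structure and for all scalars k₁,k₂ ∈ K the operation k₁(x∘y) + k₂(x∗y) is a pre-Lie algebra structure on A. -/
import Mathlib


open LinearMap Module

/-- `(A, succ, prec)` is a dendriform algebra. -/
def IsDendriform (K : Type*) [Field K] {A : Type*} [AddCommGroup A] [Module K A]
    (succ prec : A →ₗ[K] A →ₗ[K] A) : Prop :=
  (∀ x y z, prec (prec x y) z = prec x (succ y z + prec y z)) ∧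
  (∀ x y z, prec (succ x y) z = succ x (prec y z)) ∧
  (∀ x y z, succ x (succ y z) = succ (succ x y + prec x y) z)

/-- `(A, ast)` is a pre-Lie algebra. -/
def IsPreLie (K : Type*) [Field K] {A : Type*} [AddCommGroup A] [Module K A]
    (ast : A →ₗ[K] A →ₗ[K] A) : Prop :=
  ∀ x y z, ast (ast x y) z - ast x (ast y z) = ast (ast y x) z - ast y (ast x z)

/-- `(A, succ, prec, ast)` is a noncommutative pre-Poisson algebra. -/
def IsNCPrePoisson (K : Type*) [Field K] {A : Type*} [AddCommGroup A] [Module K A]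
    (succ prec ast : A →ₗ[K] A →ₗ[K] A) : Prop :=
  IsDendriform K succ prec ∧ IsPreLie K ast ∧
  (∀ x y z, succ (ast x y - ast y x) z = ast x (succ y z) - succ y (ast x z)) ∧
  (∀ x y z, prec x (ast y z - ast z y) = ast y (prec x z) - prec (ast y x) z) ∧
  (∀ x y z, ast (succ x y + prec x y) z = prec (ast x z) y + succ x (ast y z))

/-- A noncommutative pre-Poisson algebra is coherent if
`(x≻y + x≺y)∗z = x∗(y≻z) + y∗(z≺x)`. -/
def IsCoherentNCPrePoisson (K : Type*) [Field K] {A : Type*} [AddCommGroup A]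
    [Module K A] (succ prec ast : A →ₗ[K] A →ₗ[K] A) : Prop :=
  IsNCPrePoisson K succ prec ast ∧
  (∀ x y z, ast (succ x y + prec x y) z = ast x (succ y z) + ast y (prec z x))

/-- a coherent noncommutative pre-Poisson algebra gives a
compatible pre-Lie algebra `(A, ∘, ∗)`, where `x∘y = x≻y - y≺x`. -/
theorem coherent_prePoisson_gives_compatible_preLie {K A : Type*} [Field K]
    [CharZero K] [AddCommGroup A] [Module K A]
    (succ prec ast : A →ₗ[K] A →ₗ[K] A)
    (h : IsCoherentNCPrePoisson K succ prec ast) :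
    IsPreLie K (succ - prec.flip) ∧
    (∀ k₁ k₂ : K, IsPreLie K (k₁ • (succ - prec.flip) + k₂ • ast)) := by
  obtain ⟨⟨⟨hd1, hd2, hd3⟩, hT, hA1, hA2, hA3⟩, hA4⟩ := h
  -- expand linearity in all hypotheses
  simp only [map_sub, map_add, LinearMap.sub_apply, LinearMap.add_apply] at hd1 hd2 hd3 hA1 hA2 hA3 hA4
  -- the circle product associator symmetry
  have hC : ∀ x y z : A, (succ - prec.flip) ((succ - prec.flip) x y) z
      - (succ - prec.flip) x ((succ - prec.flip) y z)
      = (succ - prec.flip) ((succ - prec.flip) y x) z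
      - (succ - prec.flip) y ((succ - prec.flip) x z) := by
    intro x y z
    simp only [LinearMap.sub_apply, LinearMap.flip_apply, map_sub, map_add]
    linear_combination (norm := module)
      hd3 y x z - hd3 x y z + hd1 z x y - hd1 z y x + hd2 y z x - hd2 x z y
  -- mixed associator symmetry
  have hM : ∀ x y z : A,
      (succ - prec.flip) (ast x y) z + ast ((succ - prec.flip) x y) z
        - (succ - prec.flip) x (ast y z) - ast x ((succ - prec.flip) y z)
      = (succ - prec.flip) (ast y x) z + ast ((succ - prec.flip) y x) z
        - (succ - prec.flip) y (ast x z) - ast y ((succ - prec.flip) x z) := by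
    intro x y z
    simp only [LinearMap.sub_apply, LinearMap.flip_apply, map_sub, map_add]
    linear_combination (norm := module) hA1 x y z + hA3 x y z + hA2 z y x - hA4 y x z
  refine ⟨hC, fun k1 k2 x y z => ?_⟩
  simp only [LinearMap.add_apply, LinearMap.smul_apply, map_add, map_smul, smul_add, smul_smul]
  linear_combination (norm := module)
    (k1 * k1) • hC x y z + (k2 * k2) • hT x y z + (k1 * k2) • hM x y z
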